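/- Let k be a field of characteristic 0 and n ≥ 2 an integer, and let A = kQ/(p₂p₁) be the gentle algebra of the cylinder dissection together with the bilinear map μ̃ determined by μ̃(p₂,p₁) = q̄. Then μ̃ is a Hochschild 2-cocycle of A, i.e. a·μ̃(b,c) − μ̃(a·b,c) + μ̃(a,b·c) − μ̃(a,b)·c = 0 for all a,b,c ∈ A. -/

import Mathlib

/-!
`CylIdx n` indexes the `k`-basis of the gentle algebra `A = kQ/(p₂p₁)` of the cylinder
dissection: the quiver `Q` has vertices `u₀, …, u_{n-1}, v` (encoded as `0, …, n-1, n`),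
arrows `q_i : u_{i-1} → u_i` for `1 ≤ i ≤ n-1`, `p₁ : u₀ → v` and `p₂ : v → u_{n-1}`.
The basis of `A` consists of the trivial paths `e x`, the arrows `p₁`, `p₂`, and the
paths `q i j = q_j ⋯ q_i` for `1 ≤ i ≤ j ≤ n-1`.
-/
inductive CylIdx (n : ℕ) : Type
  | e : (x : ℕ) → x ≤ n → CylIdx n
  | p1 : CylIdx n
  | p2 : CylIdx n
  | q : (i j : ℕ) → 1 ≤ i → i ≤ j → j ≤ n - 1 → CylIdx n

namespace CylIdx

/-- Source vertex of a basis path (vertex `u_x` is encoded `x`, the vertex `v` as `n`). -/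
def src {n : ℕ} : CylIdx n → ℕ
  | e x _ => x
  | p1 => 0
  | p2 => n
  | q i _ _ _ _ => i - 1

/-- Target vertex of a basis path. -/
def tgt {n : ℕ} : CylIdx n → ℕ
  | e x _ => x
  | p1 => n
  | p2 => n - 1
  | q _ j _ _ _ => j

end CylIdx

/-- Structure constants of `A = kQ/(p₂p₁)`: the product `b · a` of two basis paths is a
basis path (the concatenation) or zero; note `p₂ · p₁ = 0` is the gentle relation. -/
def cylMul {n : ℕ} : CylIdx n → CylIdx n → Option (CylIdx n)
  | .e x _, a => if x = a.tgt then some a else none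
  | b, .e x _ => if b.src = x then some b else none
  | .q i' j' _ h2 h3, .q i j g1 g2 _ =>
      if h : i' = j + 1 then some (.q i j' g1 (by omega) h3) else none
  | _, _ => none

/-!
In coordinates, `μ̃ x y = x_{p₂} y_{p₁} • q̄`. Since no arrow leaves `u_{n-1}` or enters `u₀`,
`a q̄ = a_{e_{n-1}} q̄` and `q̄ c = c_{e₀} q̄`; and since `p₂ = e_{n-1} p₂ = p₂ e_n` and
`p₁ = e_n p₁ = p₁ e₀` are the only factorisations of the arrows, the `p₂`- and `p₁`-coordinates
of a product are `(ab)_{p₂} = a_{e_{n-1}} b_{p₂} + a_{p₂} b_{e_n}` and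
`(bc)_{p₁} = b_{e_n} c_{p₁} + b_{p₁} c_{e₀}`. Substituting, the four terms of the Hochschild
coboundary become multiples of `q̄` whose coefficients cancel in pairs.
-/

open Module

theorem Module.Basis.bilin_apply_eq_coord_mul_coord_smul {R M N ι : Type*} [CommSemiring R]
    [AddCommMonoid M] [Module R M] [AddCommMonoid N] [Module R N] (B : Basis ι R M)
    (μ : M →ₗ[R] M →ₗ[R] N) (i₀ j₀ : ι) (v : N) (h₀ : μ (B i₀) (B j₀) = v)
    (h : ∀ i j, ¬(i = i₀ ∧ j = j₀) → μ (B i) (B j) = 0) (x y : M) :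
    μ x y = (B.coord i₀ x * B.coord j₀ y) • v := by
  suffices μ = ((LinearMap.mul R R).compl₁₂ (B.coord i₀) (B.coord j₀)).compr₂
      (LinearMap.toSpanSingleton R N v) from
    LinearMap.congr_fun₂ this x y
  refine LinearMap.ext_basis B B fun i j => ?_
  by_cases hij : i = i₀ ∧ j = j₀
  · obtain ⟨rfl, rfl⟩ := hij
    simp [h₀]
  · rw [h i j hij]
    rcases not_and_or.mp hij with hi | hj
    · simp [Finsupp.single_eq_of_ne' hi]
    · simp [Finsupp.single_eq_of_ne' hj]

namespace CylIdx

variable {k A : Type*} [CommSemiring k] [Semiring A] [Algebra k A] {n : ℕ}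
  (B : Basis (CylIdx n) k A)

theorem mul_basis_q_last (hmul : ∀ b a : CylIdx n, B b * B a = (cylMul b a).elim 0 B)
    (a : A) (i : ℕ) (h₁ : 1 ≤ i) (h₂ : i ≤ n - 1) :
    a * B (.q i (n - 1) h₁ h₂ le_rfl) =
      B.coord (.e (n - 1) (Nat.sub_le n 1)) a • B (.q i (n - 1) h₁ h₂ le_rfl) := by
  suffices LinearMap.mulRight k (B (.q i (n - 1) h₁ h₂ le_rfl)) =
      (B.coord (.e (n - 1) (Nat.sub_le n 1))).smulRight (B (.q i (n - 1) h₁ h₂ le_rfl)) from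
    LinearMap.congr_fun this a
  refine B.ext fun b => ?_
  rcases b with ⟨x, hx⟩ | _ | _ | ⟨i', j', _, _, _⟩ <;>
    simp [hmul, cylMul, tgt] <;> split_ifs <;> first | omega | simp_all

theorem basis_q_first_mul (hmul : ∀ b a : CylIdx n, B b * B a = (cylMul b a).elim 0 B)
    (a : A) (j : ℕ) (h₂ : 1 ≤ j) (h₃ : j ≤ n - 1) :
    B (.q 1 j le_rfl h₂ h₃) * a = B.coord (.e 0 n.zero_le) a • B (.q 1 j le_rfl h₂ h₃) := by
  classical
  suffices LinearMap.mulLeft k (B (.q 1 j le_rfl h₂ h₃)) =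
      (B.coord (.e 0 n.zero_le)).smulRight (B (.q 1 j le_rfl h₂ h₃)) from
    LinearMap.congr_fun this a
  refine B.ext fun b => ?_
  rcases b with ⟨x, hx⟩ | _ | _ | ⟨i', j', _, _, _⟩ <;>
    simp [hmul, cylMul, src, Finsupp.single_apply, eq_comm (a := 0)] <;>
    split_ifs <;> first | rfl | omega

theorem coord_p2_mul (hmul : ∀ b a : CylIdx n, B b * B a = (cylMul b a).elim 0 B) (a b : A) :
    B.coord .p2 (a * b) = B.coord (.e (n - 1) (Nat.sub_le n 1)) a * B.coord .p2 b +
      B.coord .p2 a * B.coord (.e n le_rfl) b := by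
  suffices (LinearMap.mul k A).compr₂ (B.coord .p2) =
      (LinearMap.mul k k).compl₁₂ (B.coord (.e (n - 1) (Nat.sub_le n 1))) (B.coord .p2) +
      (LinearMap.mul k k).compl₁₂ (B.coord .p2) (B.coord (.e n le_rfl)) from
    LinearMap.congr_fun₂ this a b
  refine LinearMap.ext_basis B B fun i j => ?_
  rcases i with ⟨x, hx⟩ | _ | _ | ⟨i, i', _, _, _⟩ <;>
    rcases j with ⟨y, hy⟩ | _ | _ | ⟨j, j', _, _, _⟩ <;>
    simp [hmul, cylMul, src, tgt] <;>
    split_ifs <;> first | omega | simp_all [eq_comm]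

theorem coord_p1_mul (hmul : ∀ b a : CylIdx n, B b * B a = (cylMul b a).elim 0 B) (a b : A) :
    B.coord .p1 (a * b) = B.coord (.e n le_rfl) a * B.coord .p1 b +
      B.coord .p1 a * B.coord (.e 0 n.zero_le) b := by
  suffices (LinearMap.mul k A).compr₂ (B.coord .p1) =
      (LinearMap.mul k k).compl₁₂ (B.coord (.e n le_rfl)) (B.coord .p1) +
      (LinearMap.mul k k).compl₁₂ (B.coord .p1) (B.coord (.e 0 n.zero_le)) from
    LinearMap.congr_fun₂ this a b
  refine LinearMap.ext_basis B B fun i j => ?_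
  rcases i with ⟨x, hx⟩ | _ | _ | ⟨i, i', _, _, _⟩ <;>
    rcases j with ⟨y, hy⟩ | _ | _ | ⟨j, j', _, _, _⟩ <;>
    simp [hmul, cylMul, src, tgt] <;>
    split_ifs <;> first | omega | simp_all [eq_comm]

end CylIdx

/-- **μ̃ is a Hochschild 2-cocycle** of the gentle algebra `A = kQ/(p₂p₁)` of the
cylinder dissection. -/
theorem cylinder_mu_is_cocycle
    (k : Type*) [Field k]
    (n : ℕ) (hn : 2 ≤ n)
    (A : Type*) [Ring A] [Algebra k A]
    (B : Module.Basis (CylIdx n) k A)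
    (hmul : ∀ b a : CylIdx n, B b * B a = (cylMul b a).elim 0 B)
    (μ : A →ₗ[k] A →ₗ[k] A)
    (hμ1 : μ (B .p2) (B .p1) = B (.q 1 (n - 1) le_rfl (by omega) le_rfl))
    (hμ0 : ∀ b a : CylIdx n, ¬(b = .p2 ∧ a = .p1) → μ (B b) (B a) = 0) :
    ∀ a b c : A, a * μ b c - μ (a * b) c + μ a (b * c) - μ a b * c = 0 := by
  intro a b c
  have hμ (x y : A) := B.bilin_apply_eq_coord_mul_coord_smul μ .p2 .p1 _ hμ1 hμ0 x y
  simp only [hμ, mul_smul_comm, smul_mul_assoc, CylIdx.mul_basis_q_last B hmul,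
    CylIdx.basis_q_first_mul B hmul, CylIdx.coord_p2_mul B hmul, CylIdx.coord_p1_mul B hmul]
  module
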